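/- Let V be a standard value-function candidate. Then C is right-open: for every x ∈ C there exists h > 0 such that [x, x+h) ⊆ C. -/

import Mathlib

open MeasureTheory Set Filter

noncomputable section

/-- Drift coefficient: c(x) = p + r x for x ≥ 0, c(x) = p + α x for x < 0. -/
def drift (p r a x : ℝ) : ℝ := if 0 ≤ x then p + r * x else p + a * x

/-- I_v(x) = ∫_{(0, x+p/α]} v(x−u) dμ(u). -/
def Iop (p a : ℝ) (mu : Measure ℝ) (v : ℝ → ℝ) (x : ℝ) : ℝ :=
  ∫ u in Set.Ioc (0 : ℝ) (x + p / a), v (x - u) ∂mu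

/-- L_{v,φ}(x) = c(x)·φ′(x) − (λ+δ)·v(x) + λ·I_v(x). -/
def Lphi (p lam d r a : ℝ) (mu : Measure ℝ) (v phi : ℝ → ℝ) (x : ℝ) : ℝ :=
  drift p r a x * deriv phi x - (lam + d) * v x + lam * Iop p a mu v x

/-- G_v(x) = c(x) − (λ+δ)·v(x) + λ·I_v(x). -/
def Gop (p lam d r a : ℝ) (mu : Measure ℝ) (v : ℝ → ℝ) (x : ℝ) : ℝ :=
  drift p r a x - (lam + d) * v x + lam * Iop p a mu v x

/-- Viscosity sub-solution of the HJB equation on J ⊆ (−p/α,∞). -/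
def IsViscSubsol (p lam d r a : ℝ) (mu : Measure ℝ) (u : ℝ → ℝ) (J : Set ℝ) : Prop :=
  ∀ x ∈ J, ∀ phi : ℝ → ℝ, ContDiff ℝ 1 phi → phi x = u x →
    (∀ y ∈ Set.Ici (-(p / a)), u y - phi y ≤ u x - phi x) →
    0 ≤ max (1 - deriv phi x) (Lphi p lam d r a mu u phi x)

/-- Viscosity super-solution of the HJB equation on J ⊆ (−p/α,∞). -/
def IsViscSupersol (p lam d r a : ℝ) (mu : Measure ℝ) (u : ℝ → ℝ) (J : Set ℝ) : Prop :=
  ∀ x ∈ J, ∀ phi : ℝ → ℝ, ContDiff ℝ 1 phi → phi x = u x →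
    (∀ y ∈ Set.Ici (-(p / a)), u x - phi x ≤ u y - phi y) →
    max (1 - deriv phi x) (Lphi p lam d r a mu u phi x) ≤ 0

/-- Viscosity solution: both sub- and super-solution. -/
def IsViscSol (p lam d r a : ℝ) (mu : Measure ℝ) (u : ℝ → ℝ) (J : Set ℝ) : Prop :=
  IsViscSubsol p lam d r a mu u J ∧ IsViscSupersol p lam d r a mu u J

/-- Locally Lipschitz on a set. -/
def LocLipOn (s : Set ℝ) (u : ℝ → ℝ) : Prop :=
  ∀ x ∈ s, ∃ K : NNReal, ∃ eps : ℝ, 0 < eps ∧ LipschitzOnWith K u (s ∩ Metric.ball x eps)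

/-- Linear growth bound on [−p/α,∞). -/
def LinGrowth (p a : ℝ) (u : ℝ → ℝ) : Prop :=
  ∃ c₁ c₂ : ℝ, ∀ x : ℝ, -(p / a) ≤ x → u x ≤ c₁ * x + c₂

/-- Standard value-function candidate. -/
structure IsCandidate (p lam d r a : ℝ) (mu : Measure ℝ) (V : ℝ → ℝ) : Prop where
  cont : ContinuousOn V (Set.Ici (-(p / a)))
  nonneg : ∀ x ∈ Set.Ici (-(p / a)), 0 ≤ V x
  mono : MonotoneOn V (Set.Ici (-(p / a)))
  boundary : V (-(p / a)) = 0
  slope : ∀ x y : ℝ, -(p / a) ≤ x → x ≤ y → y - x ≤ V y - V x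
  growth : ∀ x : ℝ, 0 ≤ x → V x ≤ (d * x + p) / (d - r) + p / a
  locLip : LocLipOn (Set.Ioi (-(p / a))) V
  visc : IsViscSol p lam d r a mu V (Set.Ioi (-(p / a)))
  derivLim : ∀ x ∈ Set.Ioi (-(p / a)), ∀ (h : ℕ → ℝ) (dd : ℝ),
      ((∀ n, 0 < h n) ∨ (∀ n, h n < 0)) →
      Filter.Tendsto h Filter.atTop (nhds 0) →
      Filter.Tendsto (fun n => (V (x + h n) - V x) / h n) Filter.atTop (nhds dd) →
      1 ≤ dd ∧ dd * drift p r a x - (lam + d) * V x + lam * Iop p a mu V x ≤ 0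

/-- The set A = {x ∈ [−p/α,∞) : G_V(x) = 0}. -/
def setA (p lam d r a : ℝ) (mu : Measure ℝ) (V : ℝ → ℝ) : Set ℝ :=
  {x | x ∈ Set.Ici (-(p / a)) ∧ Gop p lam d r a mu V x = 0}

/-- The set B = {x ∈ [−p/α,∞) : V′(x) exists, V′(x) = 1 and G_V(x) < 0}. -/
def setB (p lam d r a : ℝ) (mu : Measure ℝ) (V : ℝ → ℝ) : Set ℝ :=
  {x | x ∈ Set.Ici (-(p / a)) ∧ DifferentiableAt ℝ V x ∧ deriv V x = 1 ∧
      Gop p lam d r a mu V x < 0}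

/-- The set C = [−p/α,∞) \ (A ∪ B). -/
def setC (p lam d r a : ℝ) (mu : Measure ℝ) (V : ℝ → ℝ) : Set ℝ :=
  Set.Ici (-(p / a)) \ (setA p lam d r a mu V ∪ setB p lam d r a mu V)

/-!
Let `x ∈ C`. Since `G_V(−p/α) = 0` and every one-sided difference quotient limit `d ≥ 1` of `V`
gives `G_V ≤ d·c − (λ+δ)V + λI_V ≤ 0`, we have `x > −p/α` and `G_V(x) < 0`. The operator
`G_V` is continuous there (after extending `V` by `0` to the left, `I_V` is a convolution of a
continuous monotone function with `μ`), so near `x` and for slopes `q > 1` close to `1` we still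
have `c(w)(q − 1) + G_V(w) < 0`. The sub-solution property then forbids `V` to be touched from
above by a line of slope `q` at such `w`. Hence `G_V < 0` to the right of `x`, and if some
`y ∈ (x, x + h)` were in `B`, maximising `V(t) − q t` over `[u, y]` shows that
`V(z) − V(u) ≤ q (z − u)` for all `u ≤ z`, so `V(t) − t` is constant on `(x − h, y]`. Then
`V′(x) = 1` and `x ∈ B`, a contradiction.
-/

open Topology

lemma drift_pos {p r a x : ℝ} (hp : 0 < p) (hr : 0 ≤ r) (ha : 0 < a) (hx : -(p / a) < x) :
    0 < drift p r a x := by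
  unfold drift
  split_ifs with h
  · positivity
  · have : p + a * x = a * (x + p / a) := by field_simp; ring
    rw [this]
    exact mul_pos ha (by linarith)

lemma continuous_drift (p r a : ℝ) : Continuous (drift p r a) :=
  Continuous.if_le (by fun_prop) (by fun_prop) continuous_const continuous_id
    fun x hx => by simp [← hx]

lemma affine_le_quadratic {b D ρ t : ℝ} (hρ : 0 < ρ) (ht : ρ ≤ |t|) :
    b * t + D ≤ (|b| / ρ + |D| / ρ ^ 2) * t ^ 2 := by
  have h₁ : ρ * |t| ≤ t ^ 2 := by
    rw [← sq_abs]
    nlinarith [abs_nonneg t]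
  have h₂ : ρ ^ 2 ≤ t ^ 2 := by
    simpa only [sq_abs] using pow_le_pow_left₀ hρ.le ht 2
  calc b * t + D ≤ |b| * |t| + |D| :=
        add_le_add ((le_abs_self _).trans (abs_mul b t).le) (le_abs_self D)
    _ = |b| / ρ * (ρ * |t|) + |D| / ρ ^ 2 * ρ ^ 2 := by field_simp
    _ ≤ |b| / ρ * t ^ 2 + |D| / ρ ^ 2 * t ^ 2 := by gcongr
    _ = (|b| / ρ + |D| / ρ ^ 2) * t ^ 2 := by ring

/-- Add to the touching line a multiple of `(y − w)²` large enough to beat the linear growth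
of `g` outside the neighbourhood where the line is above `g`. -/
lemma exists_contDiff_touching_above {g : ℝ → ℝ} {S : Set ℝ} {C₁ C₂ q w : ℝ}
    (hlin : ∀ y ∈ S, g y ≤ C₁ * y + C₂) (hmax : IsLocalMax (fun t => g t - q * t) w) :
    ∃ φ : ℝ → ℝ, ContDiff ℝ 1 φ ∧ φ w = g w ∧ deriv φ w = q ∧
      ∀ y ∈ S, g y - φ y ≤ g w - φ w := by
  obtain ⟨ρ, hρ, hball⟩ := Metric.eventually_nhds_iff_ball.mp hmax
  set A := |C₁ - q| / ρ + |C₁ * w + C₂ - g w| / ρ ^ 2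
  have hA : 0 ≤ A := by positivity
  have hderiv : HasDerivAt (fun y => g w + q * (y - w) + A * (y - w) ^ 2) q w :=
    (((((hasDerivAt_id' w).sub_const w).const_mul q).const_add (g w)).add
      ((((hasDerivAt_id' w).sub_const w).pow 2).const_mul A)).congr_deriv (by simp)
  refine ⟨fun y => g w + q * (y - w) + A * (y - w) ^ 2, by fun_prop, by simp, hderiv.deriv,
    fun y hy => ?_⟩
  rcases lt_or_ge |y - w| ρ with hnear | hfar
  · have h := hball y (by rwa [Metric.mem_ball, Real.dist_eq])
    nlinarith [mul_nonneg hA (sq_nonneg (y - w))]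
  · have h := affine_le_quadratic (b := C₁ - q) (D := C₁ * w + C₂ - g w) hρ hfar
    nlinarith [hlin y hy]

lemma LipschitzOnWith.exists_tendsto_slope {f : ℝ → ℝ} {K : NNReal} {s : Set ℝ} {x : ℝ}
    (hf : LipschitzOnWith K f s) (hs : s ∈ 𝓝 x) :
    ∃ h : ℕ → ℝ, (∀ n, 0 < h n) ∧ Tendsto h atTop (𝓝 0) ∧
      ∃ d, Tendsto (fun n => (f (x + h n) - f x) / h n) atTop (𝓝 d) := by
  obtain ⟨ε, hε, hsub⟩ := Metric.mem_nhds_iff.mp hs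
  obtain ⟨u, -, hu, hlim⟩ := exists_seq_strictAnti_tendsto' (lt_add_of_pos_right x hε)
  have hmem : ∀ n, u n ∈ s := fun n => hsub <| by
    rw [Real.ball_eq_Ioo]
    exact ⟨by linarith [(hu n).1], (hu n).2⟩
  have hbound : ∀ n, (f (u n) - f x) / (u n - x) ∈ Metric.closedBall (0 : ℝ) K := fun n => by
    have hpos : 0 < u n - x := sub_pos.2 (hu n).1
    have h := hf.dist_le_mul _ (hmem n) _ (mem_of_mem_nhds hs)
    rw [Real.dist_eq, Real.dist_eq, abs_of_pos hpos] at h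
    rw [Metric.mem_closedBall, dist_zero_right, norm_div, Real.norm_eq_abs, Real.norm_eq_abs,
      abs_of_pos hpos, div_le_iff₀ hpos]
    exact h
  obtain ⟨d, -, φ, hφ, htend⟩ := tendsto_subseq_of_bounded Metric.isBounded_closedBall hbound
  refine ⟨fun n => u (φ n) - x, fun n => sub_pos.2 (hu _).1, ?_, d, ?_⟩
  · simpa using (hlim.comp hφ.tendsto_atTop).sub_const x
  · simp only [add_sub_cancel]
    exact htend

lemma continuous_setIntegral_Ioi_comp_sub {f : ℝ → ℝ} (hf : Continuous f) (hmono : Monotone f)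
    (hnonneg : ∀ t, 0 ≤ f t) (ν : Measure ℝ) [IsFiniteMeasure ν] :
    Continuous fun x => ∫ u in Ioi 0, f (x - u) ∂ν := by
  refine continuous_iff_continuousAt.2 fun x₀ =>
    continuousAt_of_dominated (bound := fun _ => f (x₀ + 1)) ?_ ?_ (integrable_const _) ?_
  · exact Eventually.of_forall fun x => (hf.comp (by fun_prop)).aestronglyMeasurable
  · filter_upwards [Iio_mem_nhds (lt_add_one x₀)] with x hx
    refine (ae_restrict_iff' measurableSet_Ioi).2 (Eventually.of_forall fun u hu => ?_)
    rw [Real.norm_eq_abs, abs_of_nonneg (hnonneg _)]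
    exact hmono (by linarith [mem_Ioi.1 hu, mem_Iio.1 hx])
  · exact Eventually.of_forall fun u => (hf.comp (by fun_prop)).continuousAt

lemma IsMaxOn.hasDerivAt_nonneg_of_right {g : ℝ → ℝ} {g' u y : ℝ} (huy : u < y)
    (hmax : IsMaxOn g (Icc u y) y) (hg : HasDerivAt g g' y) : 0 ≤ g' := by
  refine ge_of_tendsto (hasDerivAt_iff_tendsto_slope_left_right.mp hg).1 ?_
  filter_upwards [Ioo_mem_nhdsLT huy] with t ht
  rw [slope_def_field]
  exact div_nonneg_of_nonpos (sub_nonpos.2 (hmax ⟨ht.1.le, ht.2.le⟩)) (sub_nonpos.2 ht.2.le)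

lemma isMaxOn_Icc_left_of_not_isLocalMax {g : ℝ → ℝ} {g' u y : ℝ} (huy : u ≤ y)
    (hg : ContinuousOn g (Icc u y)) (hy : HasDerivAt g g' y) (hg' : g' < 0)
    (hno : ∀ w ∈ Ioo u y, ¬ IsLocalMax g w) : IsMaxOn g (Icc u y) u := by
  obtain ⟨w, hw, hmax⟩ := isCompact_Icc.exists_isMaxOn (nonempty_Icc.2 huy) hg
  rcases hw.1.eq_or_lt with rfl | huw
  · exact hmax
  rcases hw.2.eq_or_lt with rfl | hwy
  · exact absurd (hmax.hasDerivAt_nonneg_of_right huw hy) hg'.not_ge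
  · exact absurd (hmax.isLocalMax (Icc_mem_nhds huw hwy)) (hno w ⟨huw, hwy⟩)

lemma antitoneOn_sub_id_of_not_isLocalMax {f : ℝ → ℝ} {s y : ℝ}
    (hf : ContinuousOn f (Ioc s y)) (hy : HasDerivAt f 1 y)
    (hno : ∀ᶠ q in 𝓝[>] 1, ∀ w ∈ Ioo s y, ¬ IsLocalMax (fun t => f t - q * t) w) :
    AntitoneOn (fun t => f t - t) (Ioc s y) := by
  intro u hu z hz huz
  have hsub : Icc u y ⊆ Ioc s y := Icc_subset_Ioc hu.1 le_rfl
  have key : ∀ᶠ q in 𝓝[>] (1 : ℝ), f z - q * z ≤ f u - q * u := by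
    filter_upwards [hno, self_mem_nhdsWithin] with q hq hq1
    have hderiv : HasDerivAt (fun t => f t - q * t) (1 - q) y :=
      (hy.sub ((hasDerivAt_id' y).const_mul q)).congr_deriv (by ring)
    refine isMaxOn_Icc_left_of_not_isLocalMax hu.2 ((hf.mono hsub).sub (by fun_prop)) hderiv
      (sub_neg.2 hq1) (fun w hw => hq w ⟨hu.1.trans hw.1, hw.2⟩) ⟨huz, hz.2⟩
  have hlim : Tendsto (fun q : ℝ => (f u - q * u) - (f z - q * z)) (𝓝[>] 1)
      (𝓝 ((f u - 1 * u) - (f z - 1 * z))) :=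
    ((by fun_prop : Continuous fun q : ℝ => (f u - q * u) - (f z - q * z)).tendsto 1).mono_left
      nhdsWithin_le_nhds
  have := ge_of_tendsto hlim (key.mono fun q hq => sub_nonneg.2 hq)
  linarith

lemma hasDerivAt_one_of_monotoneOn_antitoneOn {f : ℝ → ℝ} {s : Set ℝ} {x : ℝ} (hs : s ∈ 𝓝 x)
    (hmono : MonotoneOn (fun t => f t - t) s) (hanti : AntitoneOn (fun t => f t - t) s) :
    HasDerivAt f 1 x := by
  have hx := mem_of_mem_nhds hs
  have hconst : f =ᶠ[𝓝 x] fun t => f x - x + t := by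
    filter_upwards [hs] with t ht
    have h₁ := (le_total t x).elim (hmono ht hx) (hanti hx ht)
    have h₂ := (le_total t x).elim (hanti ht hx) (hmono hx ht)
    dsimp only at h₁ h₂
    linarith
  exact ((hasDerivAt_id' x).const_add (f x - x)).congr_of_eventuallyEq hconst

lemma Iop_eq_setIntegral_Ioi {p a : ℝ} {mu : Measure ℝ} {V : ℝ → ℝ} (hV0 : V (-(p / a)) = 0)
    (x : ℝ) : Iop p a mu V x = ∫ u in Ioi 0, V (max (x - u) (-(p / a))) ∂mu := by
  rw [Iop, setIntegral_eq_of_subset_of_forall_sdiff_eq_zero (s := Ioc 0 (x + p / a))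
    measurableSet_Ioi Ioc_subset_Ioi_self]
  · exact setIntegral_congr_fun measurableSet_Ioc fun u hu => by
      rw [max_eq_left (by linarith [hu.2])]
  · rintro u ⟨hu, hnot⟩
    have : x + p / a < u := lt_of_not_ge fun h => hnot ⟨hu, h⟩
    rw [max_eq_right (by linarith), hV0]

namespace IsCandidate

variable {p lam d r a : ℝ} {mu : Measure ℝ} {V : ℝ → ℝ}

lemma monotoneOn_sub_id (hV : IsCandidate p lam d r a mu V) :
    MonotoneOn (fun t => V t - t) (Ici (-(p / a))) :=
  fun s hs t _ hst => by linarith [hV.slope s t hs hst]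

lemma linGrowth (hV : IsCandidate p lam d r a mu V) : LinGrowth p a V := by
  set C := |d / (d - r)|
  refine ⟨C, p / (d - r) + p / a + C * |p / a|, fun y hy => ?_⟩
  have hC : 0 ≤ C * |p / a| := by positivity
  rcases le_total 0 y with h0 | h0
  · have hg := hV.growth y h0
    have : d / (d - r) * y ≤ C * y := mul_le_mul_of_nonneg_right (le_abs_self _) h0
    rw [add_div, mul_div_right_comm] at hg
    linarith
  · have h1 : V y ≤ V 0 := hV.mono hy (hy.trans h0) h0
    have h2 := hV.growth 0 le_rfl
    have h3 : C * -|p / a| ≤ C * y :=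
      mul_le_mul_of_nonneg_left (by linarith [le_abs_self (p / a)]) (abs_nonneg _)
    simp only [mul_zero, zero_add] at h2
    linarith

lemma Gop_boundary (hV : IsCandidate p lam d r a mu V) (hp : 0 < p) (ha : 0 < a) :
    Gop p lam d r a mu V (-(p / a)) = 0 := by
  have hpa : 0 < p / a := div_pos hp ha
  rw [Gop, Iop, hV.boundary, neg_add_cancel, Ioc_self, Measure.restrict_empty,
    integral_zero_measure, drift, if_neg (by linarith)]
  field_simp
  ring

lemma Gop_nonpos (hV : IsCandidate p lam d r a mu V) (hp : 0 < p) (hr : 0 ≤ r) (ha : 0 < a)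
    {x : ℝ} (hx : -(p / a) < x) : Gop p lam d r a mu V x ≤ 0 := by
  obtain ⟨K, ε, hε, hlip⟩ := hV.locLip x hx
  obtain ⟨h, hpos, hlim, dd, hdd⟩ :=
    hlip.exists_tendsto_slope (inter_mem (Ioi_mem_nhds hx) (Metric.ball_mem_nhds x hε))
  obtain ⟨hdd1, hL⟩ := hV.derivLim x hx h dd (Or.inl hpos) hlim hdd
  have hc := drift_pos hp hr ha hx
  rw [Gop]
  nlinarith

lemma continuousAt_Gop [IsFiniteMeasure mu] (hV : IsCandidate p lam d r a mu V) {x : ℝ}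
    (hx : -(p / a) < x) : ContinuousAt (Gop p lam d r a mu V) x := by
  set W : ℝ → ℝ := fun t => V (max t (-(p / a)))
  have hWc : Continuous W :=
    hV.cont.comp_continuous (by fun_prop) fun t => mem_Ici.2 (le_max_right _ _)
  have hWmono : Monotone W := fun s t hst =>
    hV.mono (mem_Ici.2 (le_max_right _ _)) (mem_Ici.2 (le_max_right _ _)) (max_le_max hst le_rfl)
  have hcont : Continuous fun y =>
      drift p r a y - (lam + d) * W y + lam * ∫ u in Ioi 0, W (y - u) ∂mu := by
    have := continuous_setIntegral_Ioi_comp_sub hWc hWmono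
      (fun t => hV.nonneg _ (mem_Ici.2 (le_max_right _ _))) mu
    have := continuous_drift p r a
    fun_prop
  refine hcont.continuousAt.congr (eventually_of_mem (Ioi_mem_nhds hx) fun y hy => ?_)
  simp only [Gop, Iop_eq_setIntegral_Ioi hV.boundary, W, max_eq_left (mem_Ioi.1 hy).le]

/-- The sub-solution property at `w`, tested with a `C¹` function of slope `q` at `w`. -/
lemma not_isLocalMax_sub_mul (hV : IsCandidate p lam d r a mu V) {w q : ℝ}
    (hw : -(p / a) < w) (hq : 1 < q)
    (hG : drift p r a w * (q - 1) + Gop p lam d r a mu V w < 0) :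
    ¬ IsLocalMax (fun t => V t - q * t) w := by
  intro hmax
  obtain ⟨C₁, C₂, hlin⟩ := hV.linGrowth
  obtain ⟨φ, hφ, hφw, hφ', hφmax⟩ :=
    exists_contDiff_touching_above (S := Ici (-(p / a))) hlin hmax
  have hsub := hV.visc.1 w hw φ hφ hφw hφmax
  rw [Lphi, hφ'] at hsub
  rw [Gop] at hG
  have : max (1 - q) (drift p r a w * q - (lam + d) * V w + lam * Iop p a mu V w) < 0 :=
    max_lt (by linarith) (by linarith)
  linarith

lemma exists_ball_not_isLocalMax [IsFiniteMeasure mu] (hV : IsCandidate p lam d r a mu V)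
    {x : ℝ} (hx : -(p / a) < x) (hGx : Gop p lam d r a mu V x < 0) :
    ∃ η > 0, Metric.ball x η ⊆ Ioi (-(p / a)) ∧
      (∀ w ∈ Metric.ball x η, Gop p lam d r a mu V w < 0) ∧
      ∀ᶠ q in 𝓝[>] 1, ∀ w ∈ Metric.ball x η, ¬ IsLocalMax (fun t => V t - q * t) w := by
  have hF : ContinuousAt
      (fun z : ℝ × ℝ => drift p r a z.1 * (z.2 - 1) + Gop p lam d r a mu V z.1) (x, 1) :=
    (((continuous_drift p r a).continuousAt.comp continuousAt_fst).mul
      (continuousAt_snd.sub continuousAt_const)).add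
      (ContinuousAt.comp (x := (x, (1 : ℝ))) (hV.continuousAt_Gop hx) continuousAt_fst)
  have hev : ∀ᶠ z in 𝓝 x ×ˢ 𝓝 1, drift p r a z.1 * (z.2 - 1) + Gop p lam d r a mu V z.1 < 0 := by
    rw [← nhds_prod_eq]
    exact hF.eventually (gt_mem_nhds (by simpa using hGx))
  obtain ⟨P, hP, Q, hQ, hPQ⟩ := eventually_prod_iff.mp hev
  obtain ⟨η, hη, hball⟩ := Metric.eventually_nhds_iff_ball.mp (hP.and (Ioi_mem_nhds hx))
  refine ⟨η, hη, fun w hw => (hball w hw).2,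
    fun w hw => by simpa using hPQ (hball w hw).1 hQ.self_of_nhds, ?_⟩
  filter_upwards [nhdsWithin_le_nhds hQ, self_mem_nhdsWithin] with q hq hq1 w hw
  exact hV.not_isLocalMax_sub_mul (hball w hw).2 hq1 (hPQ (hball w hw).1 hq)

end IsCandidate

theorem stmt17_general
    (p lam d r a : ℝ) (hp : 0 < p)
    (hr : 0 < r) (hra : r < a)
    (mu : Measure ℝ) [IsProbabilityMeasure mu]
    (V : ℝ → ℝ) (hV : IsCandidate p lam d r a mu V) :
    ∀ x ∈ setC p lam d r a mu V,
      ∃ h : ℝ, 0 < h ∧ Set.Ico x (x + h) ⊆ setC p lam d r a mu V := by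
  rintro x ⟨hxI, hxAB⟩
  have ha : 0 < a := hr.trans hra
  have hx : -(p / a) < x := lt_of_le_of_ne hxI fun h =>
    hxAB (Or.inl ⟨hxI, h ▸ hV.Gop_boundary hp ha⟩)
  have hGx : Gop p lam d r a mu V x < 0 :=
    (hV.Gop_nonpos hp hr.le ha hx).lt_of_ne fun h => hxAB (Or.inl ⟨hxI, h⟩)
  obtain ⟨η, hη, hball, hGneg, hno⟩ := hV.exists_ball_not_isLocalMax hx hGx
  refine ⟨η, hη, fun y hy => ⟨hxI.trans hy.1, ?_⟩⟩
  have hyη : y ∈ Metric.ball x η := by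
    rw [Real.ball_eq_Ioo]
    exact ⟨by linarith [hy.1], hy.2⟩
  rintro (⟨-, hyA⟩ | ⟨-, hyd, hy1, -⟩)
  · exact (hGneg y hyη).ne hyA
  have hVx : HasDerivAt V 1 x := by
    rcases hy.1.eq_or_lt with rfl | hxy
    · exact hy1 ▸ hyd.hasDerivAt
    have hsub : Ioc (x - η) y ⊆ Metric.ball x η := by
      rw [Real.ball_eq_Ioo]
      exact Ioc_subset_Ioo_right hy.2
    have hIci : Ioc (x - η) y ⊆ Ici (-(p / a)) := fun t ht => mem_Ici.2 (hball (hsub ht)).le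
    exact hasDerivAt_one_of_monotoneOn_antitoneOn (Ioc_mem_nhds (sub_lt_self x hη) hxy)
      (hV.monotoneOn_sub_id.mono hIci)
      (antitoneOn_sub_id_of_not_isLocalMax (hV.cont.mono hIci) (hy1 ▸ hyd.hasDerivAt)
        (hno.mono fun q hq w hw => hq w (hsub (Ioo_subset_Ioc_self hw))))
  exact hxAB (Or.inr ⟨hxI, hVx.differentiableAt, hVx.deriv, hGx⟩)

theorem stmt17
    (p lam d r a : ℝ) (hp : 0 < p) (hlam : 0 < lam) (hd : 0 < d)
    (hr : 0 < r) (hra : r < a) (hrd : r < d)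
    (mu : Measure ℝ) [IsProbabilityMeasure mu] (hmu : mu (Set.Iic 0) = 0)
    (V : ℝ → ℝ) (hV : IsCandidate p lam d r a mu V) :
    ∀ x ∈ setC p lam d r a mu V,
      ∃ h : ℝ, 0 < h ∧ Set.Ico x (x + h) ⊆ setC p lam d r a mu V :=
  stmt17_general p lam d r a hp hr hra mu V hV
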